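/- arXiv:math/0601395 — 5 statements merged into one kernel-verified Lean document; each statement's English description precedes it below -/
import Mathlib

section
/- Let V be a real vector space with a symmetric bilinear form B, and let H ∈ V satisfy B(H,H) > 0 with B negative definite on H^⊥ = {N ∈ V : B(H,N) = 0}. Let β₁ = h₁H + N₁ and β₂ = h₂H + N₂ with N₁, N₂ ∈ H^⊥ and h₁, h₂ > 0. If B(β₁+β₂, β₁+β₂) < 0, then B(β₁,β₁) < 0 or B(β₂,β₂) < 0. -/
/-!
Write `βᵢ = hᵢ H + Nᵢ` with `Nᵢ ⊥ H`, so that `B(βᵢ, βᵢ) = hᵢ² B(H,H) + B(Nᵢ,Nᵢ)`. Since `-B` is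
positive semidefinite on `H^⊥`, Cauchy–Schwarz gives `B(N₁,N₂)² ≤ B(N₁,N₁) B(N₂,N₂)`; if both
`B(βᵢ,βᵢ) ≥ 0` this is at most `(h₁ h₂ B(H,H))²`, i.e. `|B(N₁,N₂)| ≤ h₁ h₂ B(H,H)`, and expanding
`B(β₁+β₂, β₁+β₂)` then shows it is nonnegative.
-/

namespace LinearMap

variable {R M : Type*} [CommRing R] [AddCommGroup M] [Module R M]

lemma apply_smul_add_smul_add (B : M →ₗ[R] M →ₗ[R] R) (H N : M) (h : R)
    (hHN : B H N = 0) (hNH : B N H = 0) :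
    B (h • H + N) (h • H + N) = h ^ 2 * B H H + B N N := by
  simp only [map_add, map_smul, add_apply, smul_apply, smul_eq_mul, hHN, hNH]
  ring

variable [LinearOrder R] [IsStrictOrderedRing R]

lemma apply_mul_apply_le_of_forall_mem_nonpos (B : M →ₗ[R] M →ₗ[R] R) (W : Submodule R M)
    (hW : ∀ w ∈ W, B w w ≤ 0) {x y : M} (hx : x ∈ W) (hy : y ∈ W) :
    B x y * B y x ≤ B x x * B y y := by
  simpa using BilinForm.apply_mul_apply_le_of_forall_zero_le ((-B).compl₁₂ W.subtype W.subtype)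
    (fun w ↦ by simpa using hW w w.2) ⟨x, hx⟩ ⟨y, hy⟩

end LinearMap

lemma add_sq_mul_add_add_nonneg {R : Type*} [CommRing R] [LinearOrder R] [IsStrictOrderedRing R]
    {h₁ h₂ c a₁ a₂ m : R} (hh₁ : 0 < h₁) (hh₂ : 0 < h₂) (ha₁ : a₁ ≤ 0) (ha₂ : a₂ ≤ 0)
    (hm : m ^ 2 ≤ a₁ * a₂) (hβ₁ : 0 ≤ h₁ ^ 2 * c + a₁) (hβ₂ : 0 ≤ h₂ ^ 2 * c + a₂) :
    0 ≤ (h₁ + h₂) ^ 2 * c + (a₁ + 2 * m + a₂) := by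
  have hc : 0 ≤ c := nonneg_of_mul_nonneg_right (a := h₁ ^ 2) (by linarith) (by positivity)
  have hm_le : m ^ 2 ≤ (h₁ * h₂ * c) ^ 2 :=
    calc m ^ 2 ≤ (-a₁) * (-a₂) := by linarith
      _ ≤ (h₁ ^ 2 * c) * (h₂ ^ 2 * c) := by gcongr <;> linarith
      _ = (h₁ * h₂ * c) ^ 2 := by ring
  have hm_ge := (abs_le_of_sq_le_sq' hm_le (by positivity)).1
  linear_combination hβ₁ + hβ₂ + 2 * hm_ge

theorem stmt_2_general (V : Type*) [AddCommGroup V] [Module ℝ V]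
    (B : V →ₗ[ℝ] V →ₗ[ℝ] ℝ) (hsymm : ∀ x y : V, B x y = B y x)
    (H : V)
    (hnegdef : ∀ N : V, B H N = 0 → N ≠ 0 → B N N < 0)
    (h₁ h₂ : ℝ) (hh₁ : 0 < h₁) (hh₂ : 0 < h₂)
    (N₁ N₂ : V) (hN₁ : B H N₁ = 0) (hN₂ : B H N₂ = 0)
    (β₁ β₂ : V) (hβ₁ : β₁ = h₁ • H + N₁) (hβ₂ : β₂ = h₂ • H + N₂)
    (hsum : B (β₁ + β₂) (β₁ + β₂) < 0) :
    B β₁ β₁ < 0 ∨ B β₂ β₂ < 0 := by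
  have hperp : ∀ N ∈ LinearMap.ker (B H), B N N ≤ 0 := fun N hN ↦ by
    rcases eq_or_ne N 0 with rfl | hN0
    · simp
    · exact (hnegdef N hN hN0).le
  have hsq (h : ℝ) {N : V} (hN : B H N = 0) : B (h • H + N) (h • H + N) = h ^ 2 * B H H + B N N :=
    B.apply_smul_add_smul_add H N h hN ((hsymm N H).trans hN)
  have hβ : β₁ + β₂ = (h₁ + h₂) • H + (N₁ + N₂) := by rw [hβ₁, hβ₂, add_smul]; abel
  have hN : B (N₁ + N₂) (N₁ + N₂) = B N₁ N₁ + 2 * B N₁ N₂ + B N₂ N₂ := by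
    simp only [map_add, LinearMap.add_apply, hsymm N₂ N₁]; ring
  have hCS : B N₁ N₂ ^ 2 ≤ B N₁ N₁ * B N₂ N₂ := by
    simpa [sq, hsymm N₂ N₁] using B.apply_mul_apply_le_of_forall_mem_nonpos _ hperp hN₁ hN₂
  contrapose! hsum
  rw [hβ₁, hβ₂, hsq _ hN₁, hsq _ hN₂] at hsum
  rw [hβ, hsq _ (by simp [hN₁, hN₂]), hN]
  exact add_sq_mul_add_add_nonneg hh₁ hh₂ (hperp _ hN₁) (hperp _ hN₂) hCS hsum.1 hsum.2

/-- Let `B` be a symmetric bilinear form on a real vector space,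
`H` a vector with `B(H,H) > 0` such that `B` is negative definite on `H^⊥`.
If `β₁ = h₁•H + N₁` and `β₂ = h₂•H + N₂` with `N₁, N₂ ∈ H^⊥`, `h₁, h₂ > 0`, and
`B(β₁+β₂, β₁+β₂) < 0`, then `B(β₁,β₁) < 0` or `B(β₂,β₂) < 0`. -/
theorem stmt_2 (V : Type*) [AddCommGroup V] [Module ℝ V]
    (B : V →ₗ[ℝ] V →ₗ[ℝ] ℝ) (hsymm : ∀ x y : V, B x y = B y x)
    (H : V) (hH : 0 < B H H)
    (hnegdef : ∀ N : V, B H N = 0 → N ≠ 0 → B N N < 0)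
    (h₁ h₂ : ℝ) (hh₁ : 0 < h₁) (hh₂ : 0 < h₂)
    (N₁ N₂ : V) (hN₁ : B H N₁ = 0) (hN₂ : B H N₂ = 0)
    (β₁ β₂ : V) (hβ₁ : β₁ = h₁ • H + N₁) (hβ₂ : β₂ = h₂ • H + N₂)
    (hsum : B (β₁ + β₂) (β₁ + β₂) < 0) :
    B β₁ β₁ < 0 ∨ B β₂ β₂ < 0 :=
  stmt_2_general V B hsymm H hnegdef h₁ h₂ hh₁ hh₂ N₁ N₂ hN₁ hN₂ β₁ β₂ hβ₁ hβ₂ hsum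
end

section
/- Let L be a free ℤ-module of finite rank with a symmetric ℤ-bilinear form b, let V = L ⊗ ℝ with the extended form (also denoted b), and fix H ∈ L with b(H,H) > 0 such that b is negative definite on the orthogonal complement H^⊥ = {v ∈ V : b(H,v) = 0}. Let E ⊆ L be a set of nonzero classes such that b(H,β) > 0 for every β ∈ E, and such that for each β ∈ E the set of ordered pairs (β₁,β₂) ∈ E × E with β₁+β₂ = β is finite. Let f : L → ℚ satisfy f(β) = 0 for β ∉ E, and for every β ∈ E the recursion f(β)·b(β,β) = 8·Σ_{(β₁,β₂)∈E×E, β₁+β₂=β} f(β₁)·f(β₂)·b(β₁,β₂). Then f(β) = 0 for every β ∈ E with b(β,β) < 0. -/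
open TensorProduct

set_option maxHeartbeats 1000000 in
lemma lorentz_aux (V : Type*) [AddCommGroup V] [Module ℝ V]
    (B : V →ₗ[ℝ] V →ₗ[ℝ] ℝ) (hs : ∀ x y, B x y = B y x)
    (h : V) (hq : 0 < B h h)
    (hneg : ∀ v, B h v = 0 → v ≠ 0 → B v v < 0)
    (x y : V) (hx : 0 < B h x) (hy : 0 < B h y)
    (hxx : 0 ≤ B x x) (hyy : 0 ≤ B y y) : 0 ≤ B x y := by
  set q : ℝ := B h h with hqdef
  have nsd : ∀ v, B h v = 0 → B v v ≤ 0 := by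
    intro v hv
    by_cases h0 : v = 0
    · simp [h0]
    · exact (hneg v hv h0).le
  have CS : ∀ u v, B h u = 0 → B h v = 0 → (B u v)^2 ≤ B u u * B v v := by
    intro u v hu hv
    by_cases h0 : v = 0
    · simp [h0]
    · have hvv : B v v < 0 := hneg v hv h0
      set t : ℝ := B u v / B v v with ht
      have horth : B h (u - t • v) = 0 := by simp [map_sub, map_smul, hu, hv]
      have := nsd _ horth
      have hexp : B (u - t • v) (u - t • v) = B u u - 2 * t * B u v + t^2 * B v v := by
        simp [map_sub, map_smul, LinearMap.sub_apply, LinearMap.smul_apply, hs v u]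
        ring
      rw [hexp] at this
      have htv : t * B v v = B u v := div_mul_cancel₀ _ hvv.ne
      nlinarith [this, htv, hvv]
  set a : ℝ := B h x / q with ha
  set c : ℝ := B h y / q with hc
  have ha0 : 0 < a := div_pos hx hq
  have hc0 : 0 < c := div_pos hy hq
  set x' : V := x - a • h with hx'
  set y' : V := y - c • h with hy'
  have haq : a * q = B h x := by rw [ha]; exact div_mul_cancel₀ _ hq.ne'
  have hcq : c * q = B h y := by rw [hc]; exact div_mul_cancel₀ _ hq.ne'
  have hhx' : B h x' = 0 := by simp [hx', map_sub, map_smul]; linarith [haq]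
  have hhy' : B h y' = 0 := by simp [hy', map_sub, map_smul]; linarith [hcq]
  have hx'h : B x' h = 0 := by rw [hs]; exact hhx'
  have hy'h : B y' h = 0 := by rw [hs]; exact hhy'
  have hxh : B x h = B h x := hs x h
  have hyh : B y h = B h y := hs y h
  have ex : x = a • h + x' := by simp [hx']
  have ey : y = c • h + y' := by simp [hy']
  have expand : ∀ (s u : V) (α γ : ℝ), B (α • h + s) (γ • h + u)
      = α * γ * q + α * B h u + γ * B s h + B s u := by
    intro s u α γ
    simp [map_add, map_smul, LinearMap.add_apply, LinearMap.smul_apply, hs h, hqdef]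
    ring
  have eBxy : B x y = a * c * q + B x' y' := by
    rw [ex, ey, expand]; rw [hhy', hx'h]; ring
  have eBxx : B x x = a * a * q + B x' x' := by
    rw [ex, expand]; rw [hhx', hx'h]; ring
  have eByy : B y y = c * c * q + B y' y' := by
    rw [ey, expand]; rw [hhy', hy'h]; ring
  have h1 : (B x' y')^2 ≤ B x' x' * B y' y' := CS _ _ hhx' hhy'
  have h2 : B x' x' ≤ 0 := nsd _ hhx'
  have h3 : B y' y' ≤ 0 := nsd _ hhy'
  have h4 : -(a * a * q) ≤ B x' x' := by linarith [eBxx, hxx]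
  have h5 : -(c * c * q) ≤ B y' y' := by linarith [eByy, hyy]
  have hacq : 0 < a * c * q := by positivity
  have h6 : B x' x' * B y' y' ≤ (a * c * q) ^ 2 := by
    nlinarith [h2, h3, h4, h5,
      mul_le_mul (by linarith : -B x' x' ≤ a * a * q) (by linarith : -B y' y' ≤ c * c * q)
        (by linarith) (by positivity)]
  have h7 : (B x' y') ^ 2 ≤ (a * c * q) ^ 2 := le_trans h1 h6
  rw [eBxy]
  nlinarith [h7, hacq, sq_nonneg (B x' y' + a * c * q), sq_nonneg (B x' y' - a * c * q)]

/-- Let `L` be a free ℤ-module of finite rank with a symmetric bilinear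
form `b`, extended to `V = ℝ ⊗ L`, and let `H ∈ L` with `b(H,H) > 0` be such that the
extended form is negative definite on `H^⊥ ⊆ V`. Let `E ⊆ L` consist of nonzero classes
with `b(H,β) > 0`, each admitting only finitely many decompositions `β = β₁ + β₂` with
`βᵢ ∈ E`. If `f : L → ℚ` vanishes outside `E` and satisfies, for every `β ∈ E`,
`f(β)·b(β,β) = 8·Σ_{β₁+β₂=β, βᵢ∈E} f(β₁)·f(β₂)·b(β₁,β₂)`, then `f(β) = 0` for every
`β ∈ E` with `b(β,β) < 0`. -/
theorem stmt_3 (L : Type*) [AddCommGroup L] [Module ℤ L]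
    [Module.Free ℤ L] [Module.Finite ℤ L]
    (b : L →ₗ[ℤ] L →ₗ[ℤ] ℤ) (hsymm : ∀ x y : L, b x y = b y x)
    (H : L) (hH : 0 < b H H)
    (hnegdef : ∀ v : ℝ ⊗[ℤ] L,
      LinearMap.BilinForm.baseChange ℝ b ((1 : ℝ) ⊗ₜ[ℤ] H) v = 0 → v ≠ 0 →
      LinearMap.BilinForm.baseChange ℝ b v v < 0)
    (E : Set L) (hE0 : ∀ β ∈ E, β ≠ 0) (hEpos : ∀ β ∈ E, 0 < b H β)
    (hfin : ∀ β ∈ E, {p : L × L | p.1 ∈ E ∧ p.2 ∈ E ∧ p.1 + p.2 = β}.Finite)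
    (f : L → ℚ) (hf0 : ∀ β ∉ E, f β = 0)
    (hrec : ∀ β ∈ E, f β * (b β β : ℚ) =
      8 * ∑ᶠ p ∈ {p : L × L | p.1 ∈ E ∧ p.2 ∈ E ∧ p.1 + p.2 = β},
        f p.1 * f p.2 * (b p.1 p.2 : ℚ)) :
    ∀ β ∈ E, b β β < 0 → f β = 0 := by
  set B := LinearMap.BilinForm.baseChange ℝ b with hB
  have hbsymm : b.IsSymm := ⟨fun x y => hsymm x y⟩
  have hBs : ∀ x y : ℝ ⊗[ℤ] L, B x y = B y x := fun x y =>
    (LinearMap.isSymm_def.mp (LinearMap.BilinForm.IsSymm.baseChange (A := ℝ) hbsymm) x y)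
  have hBt : ∀ x y : L, B ((1:ℝ) ⊗ₜ[ℤ] x) ((1:ℝ) ⊗ₜ[ℤ] y) = (b x y : ℝ) := by
    intro x y
    rw [hB, LinearMap.BilinForm.baseChange_tmul]
    simp
  have intlor : ∀ x y : L, 0 < b H x → 0 < b H y → 0 ≤ b x x → 0 ≤ b y y →
      0 ≤ b x y := by
    intro x y hx hy hxx hyy
    have h := lorentz_aux (ℝ ⊗[ℤ] L) B hBs ((1:ℝ) ⊗ₜ[ℤ] H)
      (by rw [hBt]; exact_mod_cast hH) hnegdef ((1:ℝ) ⊗ₜ[ℤ] x) ((1:ℝ) ⊗ₜ[ℤ] y)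
      (by rw [hBt]; exact_mod_cast hx) (by rw [hBt]; exact_mod_cast hy)
      (by rw [hBt]; exact_mod_cast hxx) (by rw [hBt]; exact_mod_cast hyy)
    rw [hBt] at h
    exact_mod_cast h
  have key : ∀ n : ℕ, ∀ β ∈ E, b H β ≤ (n : ℤ) → b β β < 0 → f β = 0 := by
    intro n
    induction n with
    | zero => intro β hβ hle _; exact absurd (hEpos β hβ) (by omega)
    | succ n ih =>
      intro β hβ hle hneg
      have hsum0 : ∀ p ∈ {p : L × L | p.1 ∈ E ∧ p.2 ∈ E ∧ p.1 + p.2 = β},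
          f p.1 * f p.2 * (b p.1 p.2 : ℚ) = 0 := by
        intro p hp
        obtain ⟨h1, h2, h3⟩ := hp
        have hH1 : 0 < b H p.1 := hEpos _ h1
        have hH2 : 0 < b H p.2 := hEpos _ h2
        have hHsum : b H p.1 + b H p.2 = b H β := by rw [← h3]; simp
        by_cases c1 : b p.1 p.1 < 0
        · rw [ih p.1 h1 (by omega) c1]; ring
        by_cases c2 : b p.2 p.2 < 0
        · rw [ih p.2 h2 (by omega) c2]; ring
        exfalso
        have h12 : 0 ≤ b p.1 p.2 := intlor _ _ hH1 hH2 (by omega) (by omega)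
        have hexp : b β β = b p.1 p.1 + b p.1 p.2 + b p.2 p.1 + b p.2 p.2 := by
          rw [← h3]; simp [map_add, LinearMap.add_apply]; ring
        have h21 := hsymm p.1 p.2
        omega
      have hrecβ := hrec β hβ
      rw [finsum_mem_of_eqOn_zero hsum0, mul_zero] at hrecβ
      have hbb : (b β β : ℚ) ≠ 0 := by
        exact_mod_cast (by omega : b β β ≠ 0)
      exact (mul_eq_zero.mp hrecβ).resolve_right hbb
  intro β hβ hneg
  exact key (b H β).toNat β hβ (Int.self_le_toNat _) hneg
end

section
/- Let (I_d)_{d≥1} be a sequence of rational numbers satisfying, for every integer d ≥ 1, the recursion 2d/(d!)² = I_d/(2d−1)! + Σ_{r=1}^{d−1} 2r·I_r/((d+r)!·(d−r)!). Then I_d = 2 for all d ≥ 1. -/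
/-- Telescoping per-term identity. -/
lemma term_eq (d r : ℕ) (hd : 1 ≤ d) (hr : 1 ≤ r) (hrd : r ≤ d - 1) :
    2 * (r : ℚ) * 2 / (((d + r).factorial : ℚ) * ((d - r).factorial : ℚ)) =
      2 / (((d + r - 1).factorial : ℚ) * ((d - r).factorial : ℚ)) -
      2 / (((d + (r+1) - 1).factorial : ℚ) * ((d - (r+1)).factorial : ℚ)) := by
  obtain ⟨k, rfl⟩ : ∃ k, d = r + k + 1 := ⟨d - r - 1, by omega⟩
  simp only [show r + k + 1 + r = 2*r+k+1 from by omega,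
    show r + k + 1 - r = k+1 from by omega,
    show r + k + 1 + r - 1 = 2*r+k from by omega,
    show r + k + 1 + (r+1) - 1 = 2*r+k+1 from by omega,
    show r + k + 1 - (r+1) = k from by omega]
  rw [show 2*r+k+1 = (2*r+k)+1 from rfl, Nat.factorial_succ (2*r+k), Nat.factorial_succ k]
  have hA : ((2*r+k).factorial : ℚ) ≠ 0 := by positivity
  have hB : ((k).factorial : ℚ) ≠ 0 := by positivity
  have hC : ((2*r+k : ℕ) : ℚ) + 1 ≠ 0 := by positivity
  have hD : ((k : ℕ) : ℚ) + 1 ≠ 0 := by positivity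
  push_cast
  field_simp
  ring

lemma telescope (d : ℕ) (hd : 1 ≤ d) :
    ∑ r ∈ Finset.Icc 1 (d - 1),
      2 * (r : ℚ) * 2 / (((d + r).factorial : ℚ) * ((d - r).factorial : ℚ)) =
      2 / ((d.factorial : ℚ) * ((d-1).factorial : ℚ)) - 2 / (((2*d - 1).factorial : ℚ)) := by
  have key : ∀ n : ℕ, n ≤ d - 1 →
      ∑ r ∈ Finset.Icc 1 n,
        2 * (r : ℚ) * 2 / (((d + r).factorial : ℚ) * ((d - r).factorial : ℚ)) =
        2 / (((d + 1 - 1).factorial : ℚ) * ((d - 1).factorial : ℚ)) -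
        2 / (((d + (n+1) - 1).factorial : ℚ) * ((d - (n+1)).factorial : ℚ)) := by
    intro n hn
    induction n with
    | zero =>
      simp
    | succ k ih =>
      rw [Finset.sum_Icc_succ_top (by omega)]
      rw [ih (by omega), term_eq d (k+1) hd (by omega) hn]
      ring
  rcases Nat.exists_eq_add_of_le hd with ⟨e, he⟩
  have h := key (d - 1) le_rfl
  rw [h]
  have h1 : d + 1 - 1 = d := by omega
  have h2 : d + ((d-1)+1) - 1 = 2*d - 1 := by omega
  have h3 : d - ((d-1)+1) = 0 := by omega
  rw [h1, h2, h3]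
  simp

/-- If `(I_d)_{d ≥ 1}` are rational numbers satisfying, for every `d ≥ 1`,
`2d/(d!)² = I_d/(2d−1)! + Σ_{r=1}^{d−1} 2r·I_r/((d+r)!·(d−r)!)`, then `I_d = 2`
for all `d ≥ 1`. -/
theorem stmt_6 (I : ℕ → ℚ)
    (hrec : ∀ d : ℕ, 1 ≤ d →
      2 * (d : ℚ) / ((d.factorial : ℚ)) ^ 2 =
        I d / ((2 * d - 1).factorial : ℚ) +
          ∑ r ∈ Finset.Icc 1 (d - 1),
            2 * (r : ℚ) * I r / (((d + r).factorial : ℚ) * ((d - r).factorial : ℚ))) :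
    ∀ d : ℕ, 1 ≤ d → I d = 2 := by
  intro d
  induction d using Nat.strong_induction_on with
  | _ d ih =>
    intro hd
    have h := hrec d hd
    have hsum : ∑ r ∈ Finset.Icc 1 (d - 1),
        2 * (r : ℚ) * I r / (((d + r).factorial : ℚ) * ((d - r).factorial : ℚ)) =
        ∑ r ∈ Finset.Icc 1 (d - 1),
        2 * (r : ℚ) * 2 / (((d + r).factorial : ℚ) * ((d - r).factorial : ℚ)) := by
      apply Finset.sum_congr rfl
      intro r hr
      simp only [Finset.mem_Icc] at hr
      rw [ih r (by omega) hr.1]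
    rw [hsum, telescope d hd] at h
    have hfac : d.factorial = d * (d-1).factorial := by
      conv_lhs => rw [show d = (d-1)+1 by omega, Nat.factorial_succ]
      congr 1; omega
    have hlhs : 2 * (d : ℚ) / ((d.factorial : ℚ)) ^ 2 =
        2 / ((d.factorial : ℚ) * ((d-1).factorial : ℚ)) := by
      rw [hfac]
      have h1 : ((d-1).factorial : ℚ) ≠ 0 := by positivity
      have h2 : (d : ℚ) ≠ 0 := by positivity
      push_cast
      field_simp
    rw [hlhs] at h
    have hne : (((2*d - 1).factorial : ℕ) : ℚ) ≠ 0 := by positivity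
    have : I d / ((2 * d - 1).factorial : ℚ) = 2 / ((2*d - 1).factorial : ℚ) := by
      linarith
    field_simp at this
    exact this
end

section
/- Let L be a free ℤ-module of finite rank with a symmetric ℤ-bilinear form b, let V = L ⊗ ℝ with the extended form (also denoted b), and fix H ∈ L with b(H,H) > 0 such that b is negative definite on the orthogonal complement H^⊥ = {v ∈ V : b(H,v) = 0}. Let E ⊆ L be a set of nonzero classes such that b(H,β) > 0 for every β ∈ E, and such that for each β ∈ E the set of ordered pairs (β₁,β₂) ∈ E × E with β₁+β₂ = β is finite. Let f : L → ℚ satisfy f(β) = 0 for β ∉ E, and for every β ∈ E the recursion f(β)·b(β,β) = 8·Σ_{(β₁,β₂)∈E×E, β₁+β₂=β} f(β₁)·f(β₂)·b(β₁,β₂). Then for every β ∈ E one also has f(β)·b(β,β) = 8·Σ f(β₁)·f(β₂)·b(β₁,β₂), where the sum is restricted to pairs (β₁,β₂) ∈ E × E with β₁+β₂ = β and b(β₁,β₁) ≥ 0 and b(β₂,β₂) ≥ 0. -/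
open TensorProduct

section Aux

variable {L : Type*} [AddCommGroup L] [Module ℤ L]
    (b : L →ₗ[ℤ] L →ₗ[ℤ] ℤ)

lemma baseChange_one_tmul (x y : L) :
    LinearMap.BilinForm.baseChange ℝ b ((1:ℝ) ⊗ₜ[ℤ] x) ((1:ℝ) ⊗ₜ[ℤ] y) = (b x y : ℝ) := by
  rw [LinearMap.BilinForm.baseChange_tmul]
  simp

lemma real_aux (A c₁ c₂ r₁ r₂ p X₁₁ X₂₂ X₁₂ : ℝ)
    (hA : 0 < A) (hc1 : 0 < c₁) (hc2 : 0 < c₂) (hr1 : 0 ≤ r₁) (hr2 : 0 ≤ r₂)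
    (e1 : X₁₁ = A*A*r₁ - A*(c₁*c₁)) (e2 : X₂₂ = A*A*r₂ - A*(c₂*c₂))
    (e12 : X₁₂ = A*A*p - A*(c₁*c₂))
    (hd : (2*X₁₂)^2 - 4*X₂₂*X₁₁ ≤ 0) (d1' : X₁₁ ≤ 0) (d2' : X₂₂ ≤ 0) : 0 ≤ p := by
  have d1 : -X₁₁ ≤ A*(c₁*c₁) := by rw [e1]; nlinarith
  have d2 : -X₂₂ ≤ A*(c₂*c₂) := by rw [e2]; nlinarith
  have key : X₁₂^2 ≤ (A*(c₁*c₂))^2 := by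
    have hm : (-X₁₁) * (-X₂₂) ≤ (A*(c₁*c₁)) * (A*(c₂*c₂)) :=
      mul_le_mul d1 d2 (by linarith) (by positivity)
    nlinarith
  have hXge : -(A*(c₁*c₂)) ≤ X₁₂ := by
    nlinarith [sq_nonneg (X₁₂ + A*(c₁*c₂)), mul_pos hA (mul_pos hc1 hc2)]
  rw [e12] at hXge
  nlinarith [mul_pos hA hA]

/-- Reverse Cauchy–Schwarz in Lorentzian signature. -/
lemma revCS (hsymm : ∀ x y : L, b x y = b y x) (H : L) (hH : 0 < b H H)
    (hnegdef : ∀ v : ℝ ⊗[ℤ] L,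
      LinearMap.BilinForm.baseChange ℝ b ((1 : ℝ) ⊗ₜ[ℤ] H) v = 0 → v ≠ 0 →
      LinearMap.BilinForm.baseChange ℝ b v v < 0)
    (β₁ β₂ : L) (h1 : 0 < b H β₁) (h2 : 0 < b H β₂)
    (hs1 : 0 ≤ b β₁ β₁) (hs2 : 0 ≤ b β₂ β₂) : 0 ≤ b β₁ β₂ := by
  set B := LinearMap.BilinForm.baseChange ℝ b with hB
  have hbs : b.IsSymm := ⟨fun x y => by simpa using hsymm x y⟩
  have hBs : ∀ v w, B v w = B w v := by
    intro v w
    simpa using (LinearMap.BilinForm.IsSymm.baseChange ℝ hbs).eq v w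
  set h : ℝ ⊗[ℤ] L := (1:ℝ) ⊗ₜ[ℤ] H with hh
  set v₁ : ℝ ⊗[ℤ] L := (1:ℝ) ⊗ₜ[ℤ] β₁
  set v₂ : ℝ ⊗[ℤ] L := (1:ℝ) ⊗ₜ[ℤ] β₂
  set A : ℝ := (b H H : ℝ) with hA
  set c₁ : ℝ := (b H β₁ : ℝ) with hc₁
  set c₂ : ℝ := (b H β₂ : ℝ) with hc₂
  have hA0 : 0 < A := by rw [hA]; exact_mod_cast hH
  have hc1 : 0 < c₁ := by rw [hc₁]; exact_mod_cast h1
  have hc2 : 0 < c₂ := by rw [hc₂]; exact_mod_cast h2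
  have hr1 : 0 ≤ ((b β₁ β₁ : ℤ) : ℝ) := by exact_mod_cast hs1
  have hr2 : 0 ≤ ((b β₂ β₂ : ℤ) : ℝ) := by exact_mod_cast hs2
  have hb11 : B v₁ v₁ = (b β₁ β₁ : ℝ) := baseChange_one_tmul b _ _
  have hb22 : B v₂ v₂ = (b β₂ β₂ : ℝ) := baseChange_one_tmul b _ _
  have hb12 : B v₁ v₂ = (b β₁ β₂ : ℝ) := baseChange_one_tmul b _ _
  have hhv1 : B h v₁ = c₁ := baseChange_one_tmul b _ _
  have hhv2 : B h v₂ = c₂ := baseChange_one_tmul b _ _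
  have hhh : B h h = A := baseChange_one_tmul b _ _
  have hv1h : B v₁ h = c₁ := (hBs v₁ h).trans hhv1
  have hv2h : B v₂ h = c₂ := (hBs v₂ h).trans hhv2
  set w₁ : ℝ ⊗[ℤ] L := A • v₁ - c₁ • h with hw1
  set w₂ : ℝ ⊗[ℤ] L := A • v₂ - c₂ • h with hw2
  have horth : ∀ w, B h w = 0 → B w w ≤ 0 := by
    intro w hw
    rcases eq_or_ne w 0 with rfl | hne
    · simp
    · exact le_of_lt (hnegdef w hw hne)
  have hw1o : B h w₁ = 0 := by
    simp only [hw1, map_sub, map_smul, hhv1, hhh, smul_eq_mul]; ring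
  have hw2o : B h w₂ = 0 := by
    simp only [hw2, map_sub, map_smul, hhv2, hhh, smul_eq_mul]; ring
  have e1 : B w₁ w₁ = A*A*((b β₁ β₁ : ℤ) : ℝ) - A*(c₁*c₁) := by
    simp only [hw1, map_sub, map_smul, LinearMap.sub_apply, LinearMap.smul_apply,
      smul_eq_mul, hb11, hhv1, hv1h, hhh]; ring
  have e2 : B w₂ w₂ = A*A*((b β₂ β₂ : ℤ) : ℝ) - A*(c₂*c₂) := by
    simp only [hw2, map_sub, map_smul, LinearMap.sub_apply, LinearMap.smul_apply,
      smul_eq_mul, hb22, hhv2, hv2h, hhh]; ring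
  have e12 : B w₁ w₂ = A*A*((b β₁ β₂ : ℤ) : ℝ) - A*(c₁*c₂) := by
    simp only [hw1, hw2, map_sub, map_smul, LinearMap.sub_apply, LinearMap.smul_apply,
      smul_eq_mul, hb12, hhv2, hv1h, hhh]; ring
  have hq : ∀ t : ℝ, B w₂ w₂ * (t*t) + (2 * B w₁ w₂) * t + B w₁ w₁ ≤ 0 := by
    intro t
    have horth' := horth (w₁ + t • w₂) (by simp only [map_add, map_smul, hw1o, hw2o,
      smul_eq_mul, mul_zero, add_zero])
    have hexp : B (w₁ + t • w₂) (w₁ + t • w₂)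
        = B w₂ w₂ * (t*t) + (2 * B w₁ w₂) * t + B w₁ w₁ := by
      simp only [map_add, map_smul, LinearMap.add_apply, LinearMap.smul_apply,
        smul_eq_mul, hBs w₂ w₁]; ring
    linarith [hexp ▸ horth']
  have hd := discrim_le_zero_of_nonpos hq
  rw [discrim] at hd
  have d1' : B w₁ w₁ ≤ 0 := horth w₁ hw1o
  have d2' : B w₂ w₂ ≤ 0 := horth w₂ hw2o
  have : (0:ℝ) ≤ ((b β₁ β₂ : ℤ) : ℝ) :=
    real_aux A c₁ c₂ _ _ _ _ _ _ hA0 hc1 hc2 hr1 hr2 e1 e2 e12 hd d1' d2'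
  exact_mod_cast this

end Aux

/-- In the setting of Statement 3 (free ℤ-module `L` of finite rank with
symmetric form `b`, `H ∈ L` with `b(H,H) > 0` and the extended form negative definite on
`H^⊥ ⊆ ℝ ⊗ L`, `E` a set of nonzero classes positive against `H` with finite
decomposition sets, `f : L → ℚ` vanishing outside `E` and satisfying the recursion),
the recursion also holds with the sum restricted to decompositions `β = β₁ + β₂` into
classes `βᵢ ∈ E` with `b(βᵢ,βᵢ) ≥ 0`. -/
theorem stmt_10 (L : Type*) [AddCommGroup L] [Module ℤ L]
    [Module.Free ℤ L] [Module.Finite ℤ L]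
    (b : L →ₗ[ℤ] L →ₗ[ℤ] ℤ) (hsymm : ∀ x y : L, b x y = b y x)
    (H : L) (hH : 0 < b H H)
    (hnegdef : ∀ v : ℝ ⊗[ℤ] L,
      LinearMap.BilinForm.baseChange ℝ b ((1 : ℝ) ⊗ₜ[ℤ] H) v = 0 → v ≠ 0 →
      LinearMap.BilinForm.baseChange ℝ b v v < 0)
    (E : Set L) (hE0 : ∀ β ∈ E, β ≠ 0) (hEpos : ∀ β ∈ E, 0 < b H β)
    (hfin : ∀ β ∈ E, {p : L × L | p.1 ∈ E ∧ p.2 ∈ E ∧ p.1 + p.2 = β}.Finite)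
    (f : L → ℚ) (hf0 : ∀ β ∉ E, f β = 0)
    (hrec : ∀ β ∈ E, f β * (b β β : ℚ) =
      8 * ∑ᶠ p ∈ {p : L × L | p.1 ∈ E ∧ p.2 ∈ E ∧ p.1 + p.2 = β},
        f p.1 * f p.2 * (b p.1 p.2 : ℚ)) :
    ∀ β ∈ E, f β * (b β β : ℚ) =
      8 * ∑ᶠ p ∈ {p : L × L | p.1 ∈ E ∧ p.2 ∈ E ∧ p.1 + p.2 = β ∧
          0 ≤ b p.1 p.1 ∧ 0 ≤ b p.2 p.2},
        f p.1 * f p.2 * (b p.1 p.2 : ℚ) := by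
  have hrevCS := revCS b hsymm H hH hnegdef
  -- key: f vanishes on classes of negative square
  have key : ∀ n : ℕ, ∀ β ∈ E, (b H β).toNat ≤ n → b β β < 0 → f β = 0 := by
    intro n
    induction n with
    | zero =>
      intro β hβ hn _
      have := hEpos β hβ
      omega
    | succ n ih =>
      intro β hβ hn hneg
      have hsum : ∑ᶠ p ∈ {p : L × L | p.1 ∈ E ∧ p.2 ∈ E ∧ p.1 + p.2 = β},
          f p.1 * f p.2 * (b p.1 p.2 : ℚ) = 0 := by
        apply finsum_mem_of_eqOn_zero
        intro p hp
        obtain ⟨hp1, hp2, hp3⟩ := hp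
        have hb1 := hEpos _ hp1
        have hb2 := hEpos _ hp2
        have hsum' : b H p.1 + b H p.2 = b H β := by rw [← hp3, map_add]
        show f p.1 * f p.2 * (b p.1 p.2 : ℚ) = 0
        rcases lt_or_ge (b p.1 p.1) 0 with hc1 | hc1
        · have h0 : f p.1 = 0 := ih p.1 hp1 (by omega) hc1
          simp [h0]
        rcases lt_or_ge (b p.2 p.2) 0 with hc2 | hc2
        · have h0 : f p.2 = 0 := ih p.2 hp2 (by omega) hc2
          simp [h0]
        · exfalso
          have h12 := hrevCS p.1 p.2 hb1 hb2 hc1 hc2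
          have hexp : b β β = b p.1 p.1 + b p.1 p.2 + b p.2 p.1 + b p.2 p.2 := by
            rw [← hp3]
            simp only [map_add, LinearMap.add_apply]
            ring
          have hs := hsymm p.1 p.2
          linarith
      have hthis := hrec β hβ
      rw [hsum, mul_zero] at hthis
      have hbne : ((b β β : ℤ) : ℚ) ≠ 0 := by
        exact_mod_cast hneg.ne
      exact (mul_eq_zero.mp hthis).resolve_right hbne
  intro β hβ
  rw [hrec β hβ]
  congr 1
  apply finsum_mem_inter_support_eq
  ext p
  simp only [Set.mem_inter_iff, Set.mem_setOf_eq, Function.mem_support]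
  constructor
  · rintro ⟨⟨h1, h2, h3⟩, hg⟩
    refine ⟨⟨h1, h2, h3, ?_, ?_⟩, hg⟩
    · by_contra hc
      push_neg at hc
      have h0 : f p.1 = 0 := key (b H p.1).toNat p.1 h1 le_rfl hc
      exact hg (by simp [h0])
    · by_contra hc
      push_neg at hc
      have h0 : f p.2 = 0 := key (b H p.2).toNat p.2 h2 le_rfl hc
      exact hg (by simp [h0])
  · rintro ⟨⟨h1, h2, h3, _, _⟩, hg⟩
    exact ⟨⟨h1, h2, h3⟩, hg⟩
end

section
/- Let L be a free ℤ-module of finite rank with a symmetric ℤ-bilinear form b, fix H ∈ L, and let E ⊆ L be a set of nonzero classes such that b(H,β) > 0 for every β ∈ E, and such that for each β ∈ E the set of ordered pairs (β₁,β₂) ∈ E × E with β₁+β₂ = β is finite. Suppose f, g : L → ℚ both vanish outside E and both satisfy, for every β ∈ E, the recursion f(β)·b(β,β) = 8·Σ_{(β₁,β₂)∈E×E, β₁+β₂=β} f(β₁)·f(β₂)·b(β₁,β₂) (and likewise for g). If f(β) = g(β) for every β ∈ E with b(β,β) = 0, then f = g. -/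
/-!
Strong induction on the height `b(H, β) > 0`: both summands of a decomposition `β = β₁ + β₂` in
`E` have strictly smaller height, so the recursion determines `f β` from values at lower
heights whenever `b(β, β) ≠ 0`, while the remaining (isotropic) classes are where `f` and `g`
are assumed to agree.
-/

section Decompositions

variable {L : Type*} [AddCommMonoid L]

def decompositions (E : Set L) (β : L) : Set (L × L) :=
  {p | p.1 ∈ E ∧ p.2 ∈ E ∧ p.1 + p.2 = β}

variable {E : Set L}

lemma height_lt_of_mem_decompositions (ht : L →+ ℤ) (hpos : ∀ β ∈ E, 0 < ht β) {β : L}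
    {p : L × L} (hp : p ∈ decompositions E β) :
    ht p.1 < ht β ∧ ht p.2 < ht β := by
  obtain ⟨h₁, h₂, rfl⟩ := hp
  have := hpos _ h₁
  have := hpos _ h₂
  rw [map_add]
  omega

theorem eqOn_of_mul_eq_finsum_decompositions {R : Type*} [Semiring R] [IsRightCancelMulZero R]
    (ht : L →+ ℤ) (hpos : ∀ β ∈ E, 0 < ht β)
    (c : L → R) (k : R) (w : L → L → R) (f g : L → R)
    (hf : ∀ β ∈ E, f β * c β = k * ∑ᶠ p ∈ decompositions E β, f p.1 * f p.2 * w p.1 p.2)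
    (hg : ∀ β ∈ E, g β * c β = k * ∑ᶠ p ∈ decompositions E β, g p.1 * g p.2 * w p.1 p.2)
    (hiso : ∀ β ∈ E, c β = 0 → f β = g β) :
    Set.EqOn f g E := by
  intro β
  induction β using (measure fun β => (ht β).toNat).wf.induction with
  | h β ih =>
    intro hβ
    by_cases hc : c β = 0
    · exact hiso β hβ hc
    refine mul_right_cancel₀ hc ?_
    rw [hf β hβ, hg β hβ]
    congr 1
    refine finsum_mem_congr rfl fun p hp => ?_
    obtain ⟨hlt₁, hlt₂⟩ := height_lt_of_mem_decompositions ht hpos hp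
    have hpos₁ := hpos _ hp.1
    have hpos₂ := hpos _ hp.2.1
    rw [ih p.1 (show (ht p.1).toNat < (ht β).toNat by omega) hp.1,
      ih p.2 (show (ht p.2).toNat < (ht β).toNat by omega) hp.2.1]

end Decompositions

theorem stmt_11_general (L : Type*) [AddCommGroup L] [Module ℤ L]
    (b : L →ₗ[ℤ] L →ₗ[ℤ] ℤ)
    (H : L)
    (E : Set L) (hEpos : ∀ β ∈ E, 0 < b H β)
    (f g : L → ℚ) (hf0 : ∀ β ∉ E, f β = 0) (hg0 : ∀ β ∉ E, g β = 0)
    (hfrec : ∀ β ∈ E, f β * (b β β : ℚ) =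
      8 * ∑ᶠ p ∈ {p : L × L | p.1 ∈ E ∧ p.2 ∈ E ∧ p.1 + p.2 = β},
        f p.1 * f p.2 * (b p.1 p.2 : ℚ))
    (hgrec : ∀ β ∈ E, g β * (b β β : ℚ) =
      8 * ∑ᶠ p ∈ {p : L × L | p.1 ∈ E ∧ p.2 ∈ E ∧ p.1 + p.2 = β},
        g p.1 * g p.2 * (b p.1 p.2 : ℚ))
    (hiso : ∀ β ∈ E, b β β = 0 → f β = g β) :
    f = g := by
  have hE : Set.EqOn f g E :=
    eqOn_of_mul_eq_finsum_decompositions (b H).toAddMonoidHom hEpos (fun β => (b β β : ℚ)) 8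
      (fun β₁ β₂ => (b β₁ β₂ : ℚ)) f g hfrec hgrec
      fun β hβ hc => hiso β hβ (Int.cast_eq_zero.mp hc)
  funext β
  by_cases hβ : β ∈ E
  · exact hE hβ
  · rw [hf0 β hβ, hg0 β hβ]

/-- Let `L` be a free ℤ-module of finite rank with a symmetric bilinear
form `b`, `H ∈ L`, and `E ⊆ L` a set of nonzero classes with `b(H,β) > 0` for `β ∈ E`,
each admitting only finitely many decompositions `β = β₁ + β₂` with `βᵢ ∈ E`. If
`f, g : L → ℚ` both vanish outside `E`, both satisfy the recursion
`f(β)·b(β,β) = 8·Σ_{β₁+β₂=β, βᵢ∈E} f(β₁)·f(β₂)·b(β₁,β₂)` for every `β ∈ E`, and agree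
on every `β ∈ E` with `b(β,β) = 0`, then `f = g`. -/
theorem stmt_11 (L : Type*) [AddCommGroup L] [Module ℤ L]
    [Module.Free ℤ L] [Module.Finite ℤ L]
    (b : L →ₗ[ℤ] L →ₗ[ℤ] ℤ) (hsymm : ∀ x y : L, b x y = b y x)
    (H : L)
    (E : Set L) (hE0 : ∀ β ∈ E, β ≠ 0) (hEpos : ∀ β ∈ E, 0 < b H β)
    (hfin : ∀ β ∈ E, {p : L × L | p.1 ∈ E ∧ p.2 ∈ E ∧ p.1 + p.2 = β}.Finite)
    (f g : L → ℚ) (hf0 : ∀ β ∉ E, f β = 0) (hg0 : ∀ β ∉ E, g β = 0)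
    (hfrec : ∀ β ∈ E, f β * (b β β : ℚ) =
      8 * ∑ᶠ p ∈ {p : L × L | p.1 ∈ E ∧ p.2 ∈ E ∧ p.1 + p.2 = β},
        f p.1 * f p.2 * (b p.1 p.2 : ℚ))
    (hgrec : ∀ β ∈ E, g β * (b β β : ℚ) =
      8 * ∑ᶠ p ∈ {p : L × L | p.1 ∈ E ∧ p.2 ∈ E ∧ p.1 + p.2 = β},
        g p.1 * g p.2 * (b p.1 p.2 : ℚ))
    (hiso : ∀ β ∈ E, b β β = 0 → f β = g β) :
    f = g :=
  stmt_11_general L b H E hEpos f g hf0 hg0 hfrec hgrec hiso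
end
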